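/- arXiv:2509.22966 — 6 statements merged into one kernel-verified Lean document; each statement's English description precedes it below -/
import Mathlib

section
/- Let M be a finitely generated reflexive R-module of constant rank r > 0 (i.e., dim_K(K ⊗_R M) = r). If tr(M) = co(R), then M is isomorphic as an R-module to the direct sum R̄^{⊕r} of r copies of the integral closure R̄. -/
open IsLocalRing TensorProduct

/-- The trace ideal of a module: the ideal generated by all values `f m`
for `f : M →ₗ[R] R` and `m : M`. -/
def traceIdeal (R : Type*) [CommRing R] (M : Type*) [AddCommGroup M] [Module R M] :
    Ideal R :=
  ⨆ f : M →ₗ[R] R, LinearMap.range f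

/-- The conductor of a Noetherian domain `R`:
`co(R) = {r ∈ R : r · R̄ ⊆ R}`, where `R̄` is the integral closure of `R` in its
fraction field. -/
noncomputable def conductorIdeal (R : Type*) [CommRing R] [IsDomain R] : Ideal R where
  carrier := {r : R | ∀ x ∈ integralClosure R (FractionRing R),
    algebraMap R (FractionRing R) r * x ∈ (algebraMap R (FractionRing R)).range}
  add_mem' := by
    intro a b ha hb x hx
    rw [map_add, add_mul]
    exact add_mem (ha x hx) (hb x hx)
  zero_mem' := by
    intro x hx
    rw [map_zero, zero_mul]
    exact zero_mem _
  smul_mem' := by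
    intro c a ha x hx
    rw [smul_eq_mul, map_mul, mul_assoc]
    exact mul_mem ⟨c, rfl⟩ (ha x hx)

/-!
Since `tr(M) ⊆ co(R)`, multiplying the values of a functional `f : M → R` by an element of `R̄`
gives again a functional, so `R̄` acts on `M* = Hom(M, R)`, by transposition on `M**`, and hence on
`M ≅ M**`. A nonzero reflexive module has nonzero trace, so the conductor is nonzero and `R̄` is a
finite `R`-module. Then `R̄` is a Noetherian normal domain of dimension one with finitely many
maximal ideals, i.e. a PID, and `M` is a finitely generated torsion-free `R̄`-module, hence free;
its rank is read off after tensoring with `K`, using `K ⊗ R̄ = K`.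
-/

section TraceIdeal

variable {R M : Type*} [CommRing R] [AddCommGroup M] [Module R M]

theorem apply_mem_traceIdeal (f : Module.Dual R M) (m : M) : f m ∈ traceIdeal R M :=
  le_iSup (fun f : Module.Dual R M ↦ LinearMap.range f) f (LinearMap.mem_range_self f m)

theorem traceIdeal_ne_bot [Module.IsReflexive R M] [Nontrivial M] : traceIdeal R M ≠ ⊥ := by
  intro h
  obtain ⟨m, hm⟩ := exists_ne (0 : M)
  refine hm ((Module.evalEquiv R M).map_eq_zero_iff.mp (LinearMap.ext fun f ↦ ?_))
  simpa [h] using apply_mem_traceIdeal f m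

end TraceIdeal

section EndomorphismAction

variable {R A N : Type*} [CommSemiring R] [CommSemiring A] [Algebra R A]
  [AddCommMonoid N] [Module R N]

def AlgHom.dualMap (ρ : A →ₐ[R] Module.End R N) : A →ₐ[R] Module.End R (Module.Dual R N) where
  toFun a := (ρ a).dualMap
  map_one' := by ext; simp
  map_mul' a b := by rw [mul_comm a b]; ext; simp
  map_zero' := by ext; simp
  map_add' a b := by ext; simp
  commutes' r := by ext; simp

abbrev AlgHom.toModule (ρ : A →ₐ[R] Module.End R N) : Module A N :=
  Module.compHom N ρ.toRingHom

theorem AlgHom.isScalarTower_toModule (ρ : A →ₐ[R] Module.End R N) :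
    letI := ρ.toModule
    IsScalarTower R A N :=
  letI := ρ.toModule
  ⟨fun r a n ↦ show ρ (r • a) n = r • ρ a n by simp⟩

end EndomorphismAction

section SubalgebraAction

variable {R K : Type*} [CommRing R] [Field K] [Algebra R K] [IsFractionRing R K]
  {A : Subalgebra R K} {M : Type*} [AddCommGroup M] [Module R M]
  (hA : ∀ (f : Module.Dual R M) (m : M), ∀ a ∈ A,
    algebraMap R K (f m) * a ∈ (algebraMap R K).range)

noncomputable def dualSMulApply (a : A) (f : Module.Dual R M) (m : M) : R :=
  (hA f m a a.2).choose

omit [IsFractionRing R K] in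
theorem algebraMap_dualSMulApply (a : A) (f : Module.Dual R M) (m : M) :
    algebraMap R K (dualSMulApply hA a f m) = algebraMap R K (f m) * a :=
  (hA f m a a.2).choose_spec

noncomputable def dualSMul (a : A) : Module.End R (Module.Dual R M) :=
  LinearMap.mk₂ R (dualSMulApply hA a)
    (fun _ _ _ ↦ IsFractionRing.injective R K <| by simp [algebraMap_dualSMulApply, add_mul])
    (fun _ _ _ ↦ IsFractionRing.injective R K <| by simp [algebraMap_dualSMulApply, mul_assoc])
    (fun _ _ _ ↦ IsFractionRing.injective R K <| by simp [algebraMap_dualSMulApply, add_mul])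
    (fun _ _ _ ↦ IsFractionRing.injective R K <| by simp [algebraMap_dualSMulApply, mul_assoc])

@[simp]
theorem algebraMap_dualSMul_apply (a : A) (f : Module.Dual R M) (m : M) :
    algebraMap R K (dualSMul hA a f m) = algebraMap R K (f m) * a :=
  algebraMap_dualSMulApply hA a f m

noncomputable def dualAlgHom : A →ₐ[R] Module.End R (Module.Dual R M) where
  toFun := dualSMul hA
  map_one' := by ext f m; exact IsFractionRing.injective R K (by simp)
  map_mul' a b := by
    ext f m
    refine IsFractionRing.injective R K ?_
    simp only [algebraMap_dualSMul_apply, MulMemClass.coe_mul, Module.End.mul_apply]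
    ring
  map_zero' := by ext f m; exact IsFractionRing.injective R K (by simp)
  map_add' a b := by ext f m; exact IsFractionRing.injective R K (by simp [mul_add])
  commutes' r := by ext f m; exact IsFractionRing.injective R K (by simp [mul_comm])

noncomputable def reflexiveAlgHom [Module.IsReflexive R M] : A →ₐ[R] Module.End R M :=
  ((Module.evalEquiv R M).symm.conjAlgEquiv R).toAlgHom.comp (dualAlgHom hA).dualMap

end SubalgebraAction

theorem isTorsionFree_subalgebra {R K : Type*} [CommRing R] [IsDomain R] [Field K] [Algebra R K]
    [IsFractionRing R K] {A : Subalgebra R K} {M : Type*} [AddCommGroup M] [Module R M]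
    [Module A M] [IsScalarTower R A M] [Module.IsTorsionFree R M] :
    Module.IsTorsionFree A M := by
  refine .of_smul_eq_zero fun a m h ↦ or_iff_not_imp_left.mpr fun ha ↦ ?_
  obtain ⟨x, y, hy, hxy⟩ := IsFractionRing.div_surjective R (a : K)
  have hyK : algebraMap R K y ≠ 0 := IsFractionRing.to_map_ne_zero_of_mem_nonZeroDivisors hy
  have hya : y • a = algebraMap R A x := by
    ext
    rw [Subalgebra.coe_smul, Subalgebra.coe_algebraMap, ← hxy, Algebra.smul_def]
    field_simp
  have hx : x ≠ 0 := by rintro rfl; simp_all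
  rw [← smul_eq_zero_iff_right hx, ← algebraMap_smul A, ← hya, smul_assoc, h, smul_zero]

theorem dimensionLEOne_of_ringKrullDim_le_one {R : Type*} [CommRing R] [IsDomain R]
    (h : ringKrullDim R ≤ 1) : Ring.DimensionLEOne R :=
  ⟨fun hp hprime ↦ Ring.krullDimLE_one_iff_of_noZeroDivisors.mp
    (Ring.krullDimLE_iff.mpr h) _ hp hprime⟩

theorem finite_setOf_isMaximal_of_isLocalRing (R S : Type*) [CommRing R] [IsLocalRing R]
    [CommRing S] [Algebra R S] [Module.Finite R S] : {Q : Ideal S | Q.IsMaximal}.Finite :=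
  (Algebra.QuasiFinite.finite_primesOver (maximalIdeal R)).subset fun _ hQ ↦
    ⟨hQ.isPrime, ⟨(eq_maximalIdeal (hQ.under R)).symm⟩⟩

theorem finite_integralClosure_of_conductorIdeal_ne_bot (R : Type*) [CommRing R] [IsDomain R]
    [IsNoetherianRing R] (h : conductorIdeal R ≠ ⊥) :
    Module.Finite R (integralClosure R (FractionRing R)) := by
  obtain ⟨γ, hγ, hγ0⟩ := Submodule.exists_mem_ne_zero_of_ne_bot h
  have hγK : algebraMap R (FractionRing R) γ ≠ 0 :=
    IsFractionRing.to_map_ne_zero_of_mem_nonZeroDivisors (mem_nonZeroDivisors_of_ne_zero hγ0)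
  have hle : Subalgebra.toSubmodule (integralClosure R (FractionRing R)) ≤
      Submodule.span R {(algebraMap R (FractionRing R) γ)⁻¹} := fun x hx ↦ by
    obtain ⟨t, ht⟩ := hγ x hx
    refine Submodule.mem_span_singleton.mpr ⟨t, ?_⟩
    rw [Algebra.smul_def, ht]
    field_simp
  have := isNoetherian_of_le hle
  exact Module.IsNoetherian.finite R (Subalgebra.toSubmodule (integralClosure R (FractionRing R)))

section IntegralClosure

variable (R K : Type*) [CommRing R] [IsDomain R] [Field K] [Algebra R K] [IsFractionRing R K]

theorem isPrincipalIdealRing_integralClosure [IsNoetherianRing R] [IsLocalRing R]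
    [Ring.DimensionLEOne R] [Module.Finite R (integralClosure R K)] :
    IsPrincipalIdealRing (integralClosure R K) := by
  have : IsNoetherianRing (integralClosure R K) := .of_finite R _
  have : IsIntegrallyClosed (integralClosure R K) :=
    integralClosure.isIntegrallyClosedOfFiniteExtension K
  have : IsDedekindDomain (integralClosure R K) := {}
  exact .of_finite_maximals (finite_setOf_isMaximal_of_isLocalRing R _)

theorem isBaseChange_integralClosure :
    IsBaseChange K (IsScalarTower.toAlgHom R (integralClosure R K) K).toLinearMap :=
  have := isLocalizedModule_iff_isLocalization.mpr <|
    IsIntegralClosure.isLocalization R K K (integralClosure R K)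
  IsLocalizedModule.isBaseChange (nonZeroDivisors R) K _

theorem finrank_tensorProduct_of_linearEquiv_pi {M : Type*} [AddCommGroup M] [Module R M]
    {n : ℕ} (e : M ≃ₗ[R] (Fin n → integralClosure R K)) : Module.finrank K (K ⊗[R] M) = n := by
  let e' : K ⊗[R] M ≃ₗ[K] (Fin n → K) :=
    (e.baseChange R K M _).trans <| (TensorProduct.piRight R K K fun _ ↦ integralClosure R K).trans <|
      LinearEquiv.piCongrRight fun _ ↦ (isBaseChange_integralClosure R K).equiv
  simp [e'.finrank_eq]

end IntegralClosure

theorem stmt0_general (R : Type*) [CommRing R] [IsDomain R] [IsNoetherianRing R] [IsLocalRing R]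
    (hdim : ringKrullDim R = 1)
    (M : Type*) [AddCommGroup M] [Module R M] [Module.Finite R M]
    (hrefl : Module.IsReflexive R M)
    (r : ℕ) (hr : 0 < r)
    (hrank : Module.finrank (FractionRing R) (FractionRing R ⊗[R] M) = r)
    (htr : traceIdeal R M = conductorIdeal R) :
    Nonempty (M ≃ₗ[R] (Fin r → (integralClosure R (FractionRing R)))) := by
  have : Nontrivial M := by
    have := Module.nontrivial_of_finrank_pos (hrank ▸ hr)
    contrapose! this
    infer_instance
  have : Module.Finite R (integralClosure R (FractionRing R)) :=
    finite_integralClosure_of_conductorIdeal_ne_bot R (htr ▸ traceIdeal_ne_bot)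
  have := dimensionLEOne_of_ringKrullDim_le_one hdim.le
  have := isPrincipalIdealRing_integralClosure R (FractionRing R)
  let ρ := reflexiveAlgHom fun f m ↦ (htr ▸ apply_mem_traceIdeal f m : f m ∈ conductorIdeal R)
  let := ρ.toModule
  have := ρ.isScalarTower_toModule
  have : Module.Finite (integralClosure R (FractionRing R)) M := .of_restrictScalars_finite R _ _
  have : Module.IsTorsionFree (integralClosure R (FractionRing R)) M := isTorsionFree_subalgebra
  obtain ⟨n, b⟩ := Module.basisOfFiniteTypeTorsionFree' (R := integralClosure R (FractionRing R))
    (M := M)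
  let e := b.equivFun.restrictScalars R
  obtain rfl : n = r := hrank ▸ (finrank_tensorProduct_of_linearEquiv_pi R _ e).symm
  exact ⟨e⟩

/-- Let `R` be a one dimensional analytically unramified Noetherian
local domain. If `M` is a finitely generated reflexive `R`-module of constant rank
`r > 0` whose trace ideal equals the conductor of `R`, then `M ≅ R̄^{⊕ r}`. -/
theorem stmt0 (R : Type*) [CommRing R] [IsDomain R] [IsNoetherianRing R] [IsLocalRing R]
    (hdim : ringKrullDim R = 1)
    (hur : IsReduced (AdicCompletion (maximalIdeal R) R))
    (M : Type*) [AddCommGroup M] [Module R M] [Module.Finite R M]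
    (hrefl : Module.IsReflexive R M)
    (r : ℕ) (hr : 0 < r)
    (hrank : Module.finrank (FractionRing R) (FractionRing R ⊗[R] M) = r)
    (htr : traceIdeal R M = conductorIdeal R) :
    Nonempty (M ≃ₗ[R] (Fin r → (integralClosure R (FractionRing R)))) :=
  stmt0_general R hdim M hrefl r hr hrank htr
end

section
/- Let I be a nonzero ideal of R such that Iⁿ is isomorphic to co(R) as an R-module for some n ≥ 1. Then the blowup algebra B(I) equals the integral closure R̄. -/
set_option synthInstance.maxHeartbeats 400000
set_option maxHeartbeats 1000000

open IsLocalRing TensorProduct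

/-- The image of an ideal `I` of `R` inside the fraction field, as an `R`-submodule. -/
noncomputable def idealImage (R : Type*) [CommRing R] [IsDomain R] (I : Ideal R) :
    Submodule R (FractionRing R) :=
  Submodule.map (Algebra.linearMap R (FractionRing R)) I

/-- The blowup algebra `B(I) = ⋃ₙ (Iⁿ :_K Iⁿ) = {x ∈ K : x·Iⁿ ⊆ Iⁿ for some n}`,
as a subset of the fraction field `K`. -/
noncomputable def blowupSet (R : Type*) [CommRing R] [IsDomain R] (I : Ideal R) :
    Set (FractionRing R) :=
  {x | ∃ n : ℕ, ∀ y ∈ idealImage R (I ^ n), x * y ∈ idealImage R (I ^ n)}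

/-- `b(I) = {r ∈ R : r · B(I) ⊆ R}`, the conductor of the blowup algebra. -/
noncomputable def bSet (R : Type*) [CommRing R] [IsDomain R] (I : Ideal R) : Set R :=
  {r | ∀ x ∈ blowupSet R I,
    algebraMap R (FractionRing R) r * x ∈ (algebraMap R (FractionRing R)).range}

/-- `(W :_K F) = {x ∈ K : x · F ⊆ W}`. -/
def colonSet {K : Type*} [Mul K] (W F : Set K) : Set K := {x | ∀ y ∈ F, x * y ∈ W}

/-- A canonical ideal of a one-dimensional domain `R`: a nonzero ideal `ω` such that
`(ω :_K (ω :_K F)) = F` for every nonzero finitely generated `R`-submodule `F` of the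
fraction field `K` (Herzog–Kunz duality characterization). -/
noncomputable def IsCanonicalIdeal (R : Type*) [CommRing R] [IsDomain R] (ω : Ideal R) :
    Prop :=
  ω ≠ ⊥ ∧ ∀ F : Submodule R (FractionRing R), F.FG → F ≠ ⊥ →
    colonSet (idealImage R ω : Set (FractionRing R))
      (colonSet (idealImage R ω : Set (FractionRing R)) (F : Set (FractionRing R)))
      = (F : Set (FractionRing R))

/-!
A linear isomorphism between two nonzero ideals of a domain is multiplication by a nonzero
element `c` of the fraction field, so `Iⁿ ≅ co(R)` says `co(R) = c · Iⁿ`. The conductor is a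
module over `R̄`, hence so is `Iⁿ`, i.e. `R̄ ⊆ (Iⁿ :_K Iⁿ) ⊆ B(I)`. Conversely every element of
`B(I)` stabilizes a nonzero finitely generated `R`-submodule of `K` and is therefore integral.
-/

section

variable {R : Type*} [CommRing R] [IsDomain R]

theorem idealImage_ne_bot {I : Ideal R} (hI : I ≠ ⊥) : idealImage R I ≠ ⊥ := by
  refine fun h => hI (Submodule.map_injective_of_injective ?_ (h.trans (Submodule.map_bot _).symm))
  exact IsFractionRing.injective R (FractionRing R)

theorem blowupSet_subset_integralClosure [IsNoetherianRing R] {I : Ideal R} (hI : I ≠ ⊥) :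
    blowupSet R I ⊆ integralClosure R (FractionRing R) := by
  rintro x ⟨m, hm⟩
  exact isIntegral_of_smul_mem_submodule (idealImage R (I ^ m))
    (idealImage_ne_bot (pow_ne_zero m hI)) ((IsNoetherian.noetherian _).map _) x hm

theorem Ideal.exists_algebraMap_linearMap_apply_eq_mul {I J : Ideal R} (f : I →ₗ[R] J) :
    ∃ c : FractionRing R, ∀ y : I,
      algebraMap R (FractionRing R) (f y) = c * algebraMap R (FractionRing R) y := by
  rcases eq_or_ne I ⊥ with rfl | hI
  · refine ⟨0, fun y => ?_⟩
    obtain rfl : y = 0 := Subtype.ext ((Submodule.mem_bot R).mp y.2)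
    simp
  obtain ⟨a, haI, ha0⟩ := Submodule.exists_mem_ne_zero_of_ne_bot hI
  have hφa : algebraMap R (FractionRing R) a ≠ 0 :=
    (map_ne_zero_iff _ (IsFractionRing.injective R _)).mpr ha0
  refine ⟨algebraMap R _ (f ⟨a, haI⟩) / algebraMap R _ a, fun y => ?_⟩
  have hswap : a • y = (y : R) • (⟨a, haI⟩ : I) := Subtype.ext (mul_comm _ _)
  have hcross : a * (f y : R) = y * (f ⟨a, haI⟩ : R) := by
    simpa only [map_smul, Submodule.coe_smul, smul_eq_mul] using congrArg (fun z => (f z : R)) hswap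
  rw [div_mul_eq_mul_div, eq_div_iff hφa, mul_comm, ← map_mul, hcross, map_mul, mul_comm]

theorem exists_mem_conductorIdeal_eq_mul {r : R} (hr : r ∈ conductorIdeal R)
    {x : FractionRing R} (hx : x ∈ integralClosure R (FractionRing R)) :
    ∃ s ∈ conductorIdeal R, algebraMap R _ s = algebraMap R _ r * x := by
  obtain ⟨s, hs⟩ := hr x hx
  refine ⟨s, fun z hz => ?_, hs⟩
  rw [hs, mul_assoc]
  exact hr _ (mul_mem hx hz)

theorem mul_mem_idealImage_of_linearEquiv_conductorIdeal {J : Ideal R} (hJ : J ≠ ⊥)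
    (e : J ≃ₗ[R] conductorIdeal R) {x : FractionRing R}
    (hx : x ∈ integralClosure R (FractionRing R)) {y : FractionRing R}
    (hy : y ∈ idealImage R J) : x * y ∈ idealImage R J := by
  obtain ⟨c, hc⟩ := Ideal.exists_algebraMap_linearMap_apply_eq_mul e.toLinearMap
  have hc0 : c ≠ 0 := by
    rintro rfl
    obtain ⟨a, haJ, ha0⟩ := Submodule.exists_mem_ne_zero_of_ne_bot hJ
    have : e ⟨a, haJ⟩ = 0 := by
      ext; simpa using hc ⟨a, haJ⟩
    exact ha0 (congrArg Subtype.val (e.map_eq_zero_iff.mp this))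
  obtain ⟨y, hyJ, rfl⟩ := hy
  obtain ⟨s, hs, hsx⟩ := exists_mem_conductorIdeal_eq_mul (e ⟨y, hyJ⟩).2 hx
  obtain ⟨t, ht⟩ := e.surjective ⟨s, hs⟩
  refine ⟨t, t.2, mul_left_cancel₀ hc0 ?_⟩
  calc c * algebraMap R _ t = algebraMap R _ s := by simpa [ht] using (hc t).symm
    _ = c * (x * algebraMap R _ y) := by rw [hsx, ← LinearEquiv.coe_coe, hc ⟨y, hyJ⟩]; ring

end

theorem stmt2_general (R : Type*) [CommRing R] [IsDomain R] [IsNoetherianRing R]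
    (I : Ideal R) (hI : I ≠ ⊥)
    (h : ∃ n : ℕ, 1 ≤ n ∧ Nonempty ((↥(I ^ n)) ≃ₗ[R] ↥(conductorIdeal R))) :
    blowupSet R I = (integralClosure R (FractionRing R) : Set (FractionRing R)) := by
  obtain ⟨n, -, ⟨e⟩⟩ := h
  refine (blowupSet_subset_integralClosure hI).antisymm fun x hx => ⟨n, fun y hy => ?_⟩
  exact mul_mem_idealImage_of_linearEquiv_conductorIdeal (pow_ne_zero n hI) e hx hy

/-- If `I` is a nonzero ideal of a one-dimensional analytically
unramified Noetherian local domain `R` with `Iⁿ ≅ co(R)` for some `n ≥ 1`, then the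
blowup algebra `B(I)` equals the integral closure `R̄`. -/
theorem stmt2 (R : Type*) [CommRing R] [IsDomain R] [IsNoetherianRing R] [IsLocalRing R]
    (hdim : ringKrullDim R = 1)
    (hur : IsReduced (AdicCompletion (maximalIdeal R) R))
    (I : Ideal R) (hI : I ≠ ⊥)
    (h : ∃ n : ℕ, 1 ≤ n ∧ Nonempty ((↥(I ^ n)) ≃ₗ[R] ↥(conductorIdeal R))) :
    blowupSet R I = (integralClosure R (FractionRing R) : Set (FractionRing R)) :=
  stmt2_general R I hI h
end

section
/- Suppose R has minimal canonical conductor, i.e., B(ω) = R̄ for some canonical ideal ω of R. Then the ring B = (𝔪 :_K 𝔪) = {x ∈ K : x·𝔪 ⊆ 𝔪} also has minimal canonical conductor: for every canonical ideal ω_B of B (in the duality sense over B), the blowup algebra ⋃_{n≥0}(ω_Bⁿ :_K ω_Bⁿ) equals R̄, the integral closure of B in K. -/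
set_option synthInstance.maxHeartbeats 400000
set_option maxHeartbeats 1000000

open IsLocalRing TensorProduct

/-- The image of an ideal `I` of a ring `A` inside an `A`-algebra `L`,
as an `A`-submodule of `L`. -/
def idealImageIn (A : Type*) (L : Type*) [CommRing A] [CommRing L] [Algebra A L]
    (I : Ideal A) : Submodule A L :=
  Submodule.map (Algebra.linearMap A L) I

/-- A canonical ideal of a one-dimensional ring `A` with total fraction field `L`,
in the Herzog–Kunz duality sense: a nonzero ideal `ω` with `(ω :_L (ω :_L F)) = F`
for every nonzero finitely generated `A`-submodule `F` of `L`. -/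
def IsCanonicalIdealOver (A : Type*) (L : Type*) [CommRing A] [CommRing L] [Algebra A L]
    (ω : Ideal A) : Prop :=
  ω ≠ ⊥ ∧ ∀ F : Submodule A L, F.FG → F ≠ ⊥ →
    colonSet (idealImageIn A L ω : Set L)
      (colonSet (idealImageIn A L ω : Set L) (F : Set L)) = (F : Set L)

/-- The blowup algebra `B(I) = ⋃ₙ (Iⁿ :_L Iⁿ)` of an ideal `I` of `A`,
as a subset of `L`. -/
def blowupSetIn (A : Type*) (L : Type*) [CommRing A] [CommRing L] [Algebra A L]
    (I : Ideal A) : Set L :=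
  {x | ∃ n : ℕ, ∀ y ∈ idealImageIn A L (I ^ n), x * y ∈ idealImageIn A L (I ^ n)}

/-- The endomorphism ring `B = (𝔪 :_K 𝔪) = {x ∈ K : x · 𝔪 ⊆ 𝔪}`, as a subalgebra of
the fraction field `K` of `R`. -/
noncomputable def endoMaximalIdeal (R : Type*) [CommRing R] [IsDomain R] [IsLocalRing R] :
    Subalgebra R (FractionRing R) where
  carrier := {x | ∀ y ∈ idealImage R (IsLocalRing.maximalIdeal R),
    x * y ∈ idealImage R (IsLocalRing.maximalIdeal R)}
  mul_mem' := by
    intro a b ha hb y hy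
    rw [mul_assoc]
    exact ha _ (hb y hy)
  one_mem' := by
    intro y hy
    rw [one_mul]
    exact hy
  add_mem' := by
    intro a b ha hb y hy
    rw [add_mul]
    exact add_mem (ha y hy) (hb y hy)
  zero_mem' := by
    intro y hy
    rw [zero_mul]
    exact zero_mem _
  algebraMap_mem' := by
    intro r y hy
    rw [← Algebra.smul_def]
    exact Submodule.smul_mem _ r hy

/-! Let `B = 𝔪 : 𝔪`. As `R` is local, either `B = R` or `B = R : 𝔪`, so `C = ω : B` is `ω` or,
by duality (`ω : ω = R`), `𝔪ω`. Then `C` is a canonical module of `B`, and any two canonical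
modules of `B` differ by an invertible factor: `ω_B = C · Q` with `(C : ω_B) · Q = B`. Hence an
element stabilising `ωⁿ` stabilises `Cⁿ⁺¹` and `ω_Bⁿ⁺¹`, giving `R̄ = B(ω) ⊆ B(ω_B)`; conversely
`B(ω_B)` stabilises a nonzero finitely generated `R`-module, so it is integral over `R`. -/

namespace Submodule

section Colon

variable {R A : Type*} [CommSemiring R] [CommSemiring A] [Algebra R A] {I J L M : Submodule R A}

theorem div_one_eq : I / 1 = I :=
  eq_of_forall_le_iff fun X => by rw [le_div_iff_mul_le, mul_one]

theorem div_mul_le : I / J * J ≤ I :=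
  le_div_iff_mul_le.mp le_rfl

theorem div_div_eq_div_mul : I / J / L = I / (J * L) :=
  eq_of_forall_le_iff fun X => by
    rw [le_div_iff_mul_le, le_div_iff_mul_le, le_div_iff_mul_le, mul_assoc, mul_comm L]

theorem mul_div_le_div_of_mul_le (h : M * J ≤ J) : M * (I / J) ≤ I / J := by
  rw [le_div_iff_mul_le, mul_comm M, mul_assoc]
  exact (mul_le_mul_right h _).trans div_mul_le

theorem div_self_le_mul_div_mul_self (M N : Submodule R A) : M / M ≤ N * M / (N * M) := by
  rw [le_div_iff_mul_le, mul_left_comm]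
  exact mul_le_mul_right div_mul_le _

theorem div_self_pow_le (M N : Submodule R A) (n : ℕ) :
    M ^ n / M ^ n ≤ (N * M) ^ n / (N * M) ^ n := by
  rw [mul_pow]
  exact div_self_le_mul_div_mul_self _ _

theorem toSubmodule_mul_eq {S : Subalgebra R A} (h : Subalgebra.toSubmodule S * I ≤ I) :
    Subalgebra.toSubmodule S * I = I :=
  le_antisymm h <| by simpa using mul_le_mul_left (one_le.mpr S.one_mem) I

theorem div_toSubmodule_eq {S : Subalgebra R A} (h : Subalgebra.toSubmodule S * I ≤ I) :
    I / Subalgebra.toSubmodule S = I :=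
  le_antisymm (fun x hx => by simpa using hx 1 S.one_mem)
    (le_div_iff_mul_le.mpr (by rw [mul_comm]; exact h))

theorem div_toSubmodule_div {S : Subalgebra R A} (h : Subalgebra.toSubmodule S * J ≤ J) :
    I / Subalgebra.toSubmodule S / J = I / J := by
  rw [div_div_eq_div_mul, toSubmodule_mul_eq h]

end Colon

section Fractional

variable {R K : Type*} [CommRing R] [Field K] [Algebra R K] {I J : Submodule R K}

theorem FG.div [IsNoetherianRing R] (hI : I.FG) (hJ : J ≠ ⊥) : (I / J).FG := by
  obtain ⟨y, hy, hy0⟩ := (Submodule.ne_bot_iff J).mp hJ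
  refine (hI.map (LinearMap.mulLeft R y⁻¹)).of_le fun x hx => ⟨x * y, hx y hy, ?_⟩
  change y⁻¹ * (x * y) = x
  rw [mul_comm x y, inv_mul_cancel_left₀ hy0]

theorem div_ne_bot [IsDomain R] [IsFractionRing R K] (hI : I ≠ ⊥) (hJ : J.FG) : I / J ≠ ⊥ := by
  obtain ⟨x, hx, hx0⟩ := (Submodule.ne_bot_iff I).mp hI
  obtain ⟨a, ha, hJa⟩ := FractionalIdeal.isFractional_of_fg (S := nonZeroDivisors R) hJ
  refine (Submodule.ne_bot_iff _).mpr ⟨x * algebraMap R K a, fun y hy => ?_,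
    mul_ne_zero hx0 (IsFractionRing.to_map_ne_zero_of_mem_nonZeroDivisors ha)⟩
  obtain ⟨r, hr⟩ := hJa y hy
  rw [mul_assoc, ← Algebra.smul_def, ← hr, mul_comm, ← Algebra.smul_def]
  exact I.smul_mem r hx

end Fractional

end Submodule

theorem Subalgebra.toSubmodule_ne_bot {R A : Type*} [CommSemiring R] [Semiring A] [Nontrivial A]
    [Algebra R A] (S : Subalgebra R A) : Subalgebra.toSubmodule S ≠ ⊥ :=
  (Submodule.ne_bot_iff _).mpr ⟨1, S.one_mem, one_ne_zero⟩

open Submodule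

/-- A canonical module of `S` in the Herzog–Kunz sense, where `S`-modules are realised as
`S`-stable `R`-submodules of `K`. -/
structure IsCanonicalOver {R K : Type*} [CommRing R] [CommRing K] [Algebra R K]
    (S : Subalgebra R K) (ω : Submodule R K) : Prop where
  mul_le : Subalgebra.toSubmodule S * ω ≤ ω
  fg : ω.FG
  ne_bot : ω ≠ ⊥
  div_div : ∀ F : Submodule R K, Subalgebra.toSubmodule S * F ≤ F → F.FG → F ≠ ⊥ → ω / (ω / F) = F

namespace IsCanonicalOver

variable {R K : Type*} [CommRing R] [Field K] [Algebra R K] {S : Subalgebra R K}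
  {ω C W : Submodule R K}

theorem div_self (hC : IsCanonicalOver S C) (hS : (Subalgebra.toSubmodule S).FG) :
    C / C = Subalgebra.toSubmodule S := by
  calc C / C = C / (C / Subalgebra.toSubmodule S) := by rw [div_toSubmodule_eq hC.mul_le]
    _ = Subalgebra.toSubmodule S :=
      hC.div_div _ (Subalgebra.isIdempotentElem_toSubmodule S).le hS S.toSubmodule_ne_bot

theorem div [IsDomain R] [IsNoetherianRing R] [IsFractionRing R K]
    (hω : IsCanonicalOver (⊥ : Subalgebra R K) ω) (hS : (Subalgebra.toSubmodule S).FG) :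
    IsCanonicalOver S (ω / Subalgebra.toSubmodule S) where
  mul_le := mul_div_le_div_of_mul_le (Subalgebra.isIdempotentElem_toSubmodule S).le
  fg := hω.fg.div S.toSubmodule_ne_bot
  ne_bot := div_ne_bot hω.ne_bot hS
  div_div F hF hfg hne := by
    rw [div_toSubmodule_div hF, div_toSubmodule_div (mul_div_le_div_of_mul_le hF)]
    exact hω.div_div F (by rw [Algebra.toSubmodule_bot, one_mul]) hfg hne

/-- Canonical modules are unique up to an invertible factor. -/
theorem eq_mul_div [IsDomain R] [IsNoetherianRing R] [IsFractionRing R K]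
    (hC : IsCanonicalOver S C) (hW : IsCanonicalOver S W) (hS : (Subalgebra.toSubmodule S).FG) :
    W = C * (W / C) := by
  set P := C / W
  set Q := W / C
  have hPQ_le : Subalgebra.toSubmodule S * (P * Q) ≤ P * Q := by
    rw [← mul_assoc]
    exact mul_le_mul_left (mul_div_le_div_of_mul_le hW.mul_le) Q
  have hPQ_fg : (P * Q).FG := (hC.fg.div hW.ne_bot).mul (hW.fg.div hC.ne_bot)
  have hPQ_ne : P * Q ≠ ⊥ := by
    rw [Ne, mul_eq_bot, not_or]
    exact ⟨div_ne_bot hC.ne_bot hW.fg, div_ne_bot hW.ne_bot hC.fg⟩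
  have hPQ : P * Q = Subalgebra.toSubmodule S :=
    calc P * Q = C / (C / (P * Q)) := (hC.div_div _ hPQ_le hPQ_fg hPQ_ne).symm
      _ = C / C := by
        rw [← div_div_eq_div_mul, hC.div_div W hW.mul_le hW.fg hW.ne_bot,
          hW.div_div C hC.mul_le hC.fg hC.ne_bot]
      _ = Subalgebra.toSubmodule S := hC.div_self hS
  refine le_antisymm ?_ (by rw [mul_comm]; exact div_mul_le)
  calc W = W * (P * Q) := by rw [hPQ, mul_comm, toSubmodule_mul_eq hW.mul_le]
    _ ≤ C * Q := by
      rw [← mul_assoc]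
      exact mul_le_mul_left (by rw [mul_comm]; exact div_mul_le) Q

end IsCanonicalOver

section IdealImage

variable {A L : Type*} [CommRing A] [CommRing L] [Algebra A L]

theorem idealImageIn_ne_bot (h : Function.Injective (algebraMap A L)) {I : Ideal A} (hI : I ≠ ⊥) :
    idealImageIn A L I ≠ ⊥ := by
  rw [idealImageIn, Ne, ← Submodule.map_bot (Algebra.linearMap A L)]
  exact (Submodule.map_injective_of_injective h).ne hI

theorem idealImageIn_pow (I : Ideal A) (n : ℕ) :
    idealImageIn A L (I ^ n) = idealImageIn A L I ^ n :=
  Submodule.map_pow I (Algebra.ofId A L) n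

theorem mem_blowupSetIn_iff {I : Ideal A} {x : L} :
    x ∈ blowupSetIn A L I ↔ ∃ n, x ∈ idealImageIn A L I ^ n / idealImageIn A L I ^ n := by
  simp only [blowupSetIn, ← idealImageIn_pow]
  rfl

end IdealImage

section LocalRing

variable {R K : Type*} [CommRing R] [IsLocalRing R] [CommRing K] [Algebra R K]

local notation "𝔪" => idealImageIn R K (maximalIdeal R)

theorem mem_div_self_or_exists_mul_eq_one {x : K} (hx : x ∈ 1 / 𝔪) :
    x ∈ 𝔪 / 𝔪 ∨ ∃ y ∈ 𝔪, x * y = 1 := by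
  refine or_iff_not_imp_right.mpr fun hne => ?_
  rintro _ ⟨y, hy, rfl⟩
  obtain ⟨r, hr⟩ : ∃ r, algebraMap R K r = x * algebraMap R K y :=
    mem_one.mp (hx _ ⟨y, hy, rfl⟩)
  refine ⟨r, (mem_maximalIdeal r).mpr fun ⟨u, hu⟩ => hne ?_, hr⟩
  -- if `x y` were the unit `u`, then `x` would be invertible with inverse `y u⁻¹ ∈ 𝔪`
  refine ⟨algebraMap R K (y * ↑u⁻¹), ⟨_, Ideal.mul_mem_right _ _ hy, rfl⟩, ?_⟩
  rw [map_mul, ← mul_assoc, ← hr, ← hu, ← map_mul, Units.mul_inv, map_one]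

theorem div_self_maximalIdeal_eq_one_or_eq_one_div : 𝔪 / 𝔪 = 1 ∨ 𝔪 / 𝔪 = 1 / 𝔪 := by
  by_cases h : 1 / 𝔪 ≤ 𝔪 / 𝔪
  · have h𝔪 : 𝔪 ≤ 1 := by
      rw [one_eq_range]
      exact LinearMap.map_le_range
    exact .inr (le_antisymm (le_div_iff_mul_le.mpr (div_mul_le.trans h𝔪)) h)
  · obtain ⟨x, hx, hx'⟩ := SetLike.not_le_iff_exists.mp h
    obtain ⟨y, hy, hxy⟩ := (mem_div_self_or_exists_mul_eq_one hx).resolve_left hx'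
    refine .inl (le_antisymm (fun b hb => ?_) (one_le.mpr (one_mem_div.mpr le_rfl)))
    rw [← mul_one b, ← hxy, mul_left_comm]
    exact hx _ (hb y hy)

end LocalRing

theorem IsCanonicalOver.exists_div_div_self_maximalIdeal_eq_mul {R K : Type*} [CommRing R]
    [IsDomain R] [IsNoetherianRing R] [IsLocalRing R] [Field K] [Algebra R K]
    [IsFractionRing R K] {ω : Submodule R K} (hω : IsCanonicalOver (⊥ : Subalgebra R K) ω)
    (h𝔪 : maximalIdeal R ≠ ⊥) :
    ∃ J : Submodule R K, ω / (idealImageIn R K (maximalIdeal R) / idealImageIn R K (maximalIdeal R))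
      = J * ω := by
  set 𝔪 := idealImageIn R K (maximalIdeal R)
  rcases div_self_maximalIdeal_eq_one_or_eq_one_div (R := R) (K := K) with h | h
  · exact ⟨1, by rw [h, div_one_eq, one_mul]⟩
  · refine ⟨𝔪, ?_⟩
    have hbot : Subalgebra.toSubmodule (⊥ : Subalgebra R K) = 1 := Algebra.toSubmodule_bot
    have hωω : ω / ω = 1 := by simpa [hbot] using hω.div_self Subalgebra.fg_bot_toSubmodule
    have h𝔪_ne : 𝔪 ≠ ⊥ := idealImageIn_ne_bot (IsFractionRing.injective R K) h𝔪
    have h𝔪_fg : 𝔪.FG := (IsNoetherian.noetherian _).map _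
    rw [h, ← hωω, div_div_eq_div_mul, mul_comm ω]
    refine hω.div_div _ (by rw [hbot, one_mul]) (h𝔪_fg.mul hω.fg) ?_
    rw [Ne, mul_eq_bot, not_or]
    exact ⟨h𝔪_ne, hω.ne_bot⟩

/-- `F` itself, regarded as an `S`-submodule (no base change is involved). -/
def Submodule.extendScalars {R K : Type*} [CommRing R] [CommRing K] [Algebra R K]
    {S : Subalgebra R K} (F : Submodule R K) (h : Subalgebra.toSubmodule S * F ≤ F) :
    Submodule S K where
  toAddSubmonoid := F.toAddSubmonoid
  smul_mem' b _ hf := h (mul_mem_mul b.2 hf)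

theorem isCanonicalOver_bot_of_isCanonicalIdeal {R : Type*} [CommRing R] [IsDomain R]
    [IsNoetherianRing R] {ω : Ideal R} (hω : IsCanonicalIdeal R ω) :
    IsCanonicalOver (⊥ : Subalgebra R (FractionRing R)) (idealImageIn R (FractionRing R) ω) where
  mul_le := by rw [Algebra.toSubmodule_bot, one_mul]
  fg := (IsNoetherian.noetherian ω).map _
  ne_bot := idealImageIn_ne_bot (IsFractionRing.injective R _) hω.1
  div_div F _ hfg hne := SetLike.coe_injective (hω.2 F hfg hne)

theorem isCanonicalOver_of_isCanonicalIdealOver {R K : Type*} [CommRing R] [IsNoetherianRing R]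
    [Field K] [Algebra R K] {S : Subalgebra R K} (hS : (Subalgebra.toSubmodule S).FG)
    {ω : Ideal S} (hω : IsCanonicalIdealOver S K ω) :
    IsCanonicalOver S ((idealImageIn S K ω).restrictScalars R) where
  mul_le := mul_le.mpr fun b hb _ hw => (idealImageIn S K ω).smul_mem ⟨b, hb⟩ hw
  fg := hS.of_le <| by rintro _ ⟨w, _, rfl⟩; exact w.2
  ne_bot := by
    rw [Ne, restrictScalars_eq_bot_iff]
    exact idealImageIn_ne_bot Subtype.val_injective hω.1
  div_div F hF hfg hne := by
    refine SetLike.coe_injective (hω.2 (F.extendScalars hF) (FG.of_restrictScalars R hfg) ?_)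
    rwa [Ne, ← restrictScalars_eq_bot_iff R]

theorem blowupSetIn_subset_integralClosure {R K : Type*} [CommRing R] [IsNoetherianRing R]
    [Field K] [Algebra R K] {S : Subalgebra R K} (hS : (Subalgebra.toSubmodule S).FG)
    {I : Ideal S} (hI : I ≠ ⊥) : blowupSetIn S K I ⊆ integralClosure R K := by
  intro x hx
  obtain ⟨n, hn⟩ := mem_blowupSetIn_iff.mp hx
  set M := idealImageIn S K I
  obtain ⟨m, hm, hm0⟩ := (Submodule.ne_bot_iff M).mp (idealImageIn_ne_bot Subtype.val_injective hI)
  have hM_le : M ^ n ≤ 1 := pow_le_one' (by rw [one_eq_range]; exact LinearMap.map_le_range) n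
  refine isIntegral_of_smul_mem_submodule ((M ^ n).restrictScalars R)
    ((Submodule.ne_bot_iff _).mpr ⟨m ^ n, pow_mem_pow M hm n, pow_ne_zero n hm0⟩)
    (hS.of_le fun y hy => ?_) x hn
  obtain ⟨s, rfl⟩ := mem_one.mp (hM_le hy)
  exact s.2

theorem stmt5_general (R : Type*) [CommRing R] [IsDomain R] [IsNoetherianRing R] [IsLocalRing R]
    (hdim : ringKrullDim R = 1)
    (hmcc : ∃ ω : Ideal R, IsCanonicalIdeal R ω ∧
      blowupSet R ω = (integralClosure R (FractionRing R) : Set (FractionRing R))) :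
    ∀ ωB : Ideal ↥(endoMaximalIdeal R),
      IsCanonicalIdealOver ↥(endoMaximalIdeal R) (FractionRing R) ωB →
      blowupSetIn ↥(endoMaximalIdeal R) (FractionRing R) ωB =
        (integralClosure R (FractionRing R) : Set (FractionRing R)) := by
  intro ωB hωB
  obtain ⟨ω, hω, hblow⟩ := hmcc
  have h𝔪 : maximalIdeal R ≠ ⊥ := fun h => by
    simp [ringKrullDim_eq_zero_of_isField (isField_iff_maximalIdeal_eq.mpr h)] at hdim
  have hB_fg : (Subalgebra.toSubmodule (endoMaximalIdeal R)).FG :=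
    ((IsNoetherian.noetherian _).map _).div (idealImageIn_ne_bot (IsFractionRing.injective R _) h𝔪)
  set ω' := idealImageIn R (FractionRing R) ω
  have hω' : IsCanonicalOver ⊥ ω' := isCanonicalOver_bot_of_isCanonicalIdeal hω
  set C := ω' / Subalgebra.toSubmodule (endoMaximalIdeal R)
  obtain ⟨J, hJ⟩ : ∃ J, C = J * ω' := hω'.exists_div_div_self_maximalIdeal_eq_mul h𝔪
  set W := (idealImageIn _ (FractionRing R) ωB).restrictScalars R
  have hWC : W = C * (W / C) :=
    (hω'.div hB_fg).eq_mul_div (isCanonicalOver_of_isCanonicalIdealOver hB_fg hωB) hB_fg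
  refine (blowupSetIn_subset_integralClosure hB_fg hωB.1).antisymm fun z hz => ?_
  obtain ⟨n, hn⟩ := mem_blowupSetIn_iff.mp (hblow ▸ hz : z ∈ blowupSet R ω)
  have hstab : ω' ^ n / ω' ^ n ≤ W ^ (n + 1) / W ^ (n + 1) := calc
    ω' ^ n / ω' ^ n ≤ ω' ^ (n + 1) / ω' ^ (n + 1) := by
      rw [pow_succ']; exact div_self_le_mul_div_mul_self _ _
    _ ≤ C ^ (n + 1) / C ^ (n + 1) := by
      rw [hJ]; exact div_self_pow_le _ _ _
    _ ≤ W ^ (n + 1) / W ^ (n + 1) := by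
      rw [hWC, mul_comm C]; exact div_self_pow_le _ _ _
  rw [← restrictScalars_pow n.succ_ne_zero] at hstab
  exact mem_blowupSetIn_iff.mpr ⟨n + 1, hstab hn⟩

/-- If `R` has minimal canonical conductor (i.e. `B(ω) = R̄` for some
canonical ideal `ω` of `R`), then the ring `B = (𝔪 :_K 𝔪)` also has minimal canonical
conductor: for every canonical ideal `ω_B` of `B`, the blowup algebra
`⋃ₙ (ω_Bⁿ :_K ω_Bⁿ)` equals `R̄`, the integral closure of `B` (equivalently of `R`)
in `K`. -/
theorem stmt5 (R : Type*) [CommRing R] [IsDomain R] [IsNoetherianRing R] [IsLocalRing R]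
    (hdim : ringKrullDim R = 1)
    (hur : IsReduced (AdicCompletion (maximalIdeal R) R))
    (hmcc : ∃ ω : Ideal R, IsCanonicalIdeal R ω ∧
      blowupSet R ω = (integralClosure R (FractionRing R) : Set (FractionRing R))) :
    ∀ ωB : Ideal ↥(endoMaximalIdeal R),
      IsCanonicalIdealOver ↥(endoMaximalIdeal R) (FractionRing R) ωB →
      blowupSetIn ↥(endoMaximalIdeal R) (FractionRing R) ωB =
        (integralClosure R (FractionRing R) : Set (FractionRing R)) :=
  stmt5_general R hdim hmcc
end

section
/- Let R be a Noetherian domain with fraction field Frac(R), let S be a ring with R ⊆ S ⊆ Frac(R) that is finitely generated as an R-module, and set co(R,S) = {r ∈ R : r·S ⊆ R}. Let M be a finitely generated R-module. (i) If the R-module structure of M extends to an S-module structure (compatible with the inclusion R ⊆ S), then tr(M) ⊆ co(R,S). (ii) Conversely, if M is reflexive and tr(M) ⊆ co(R,S), then the R-module structure of M extends to an S-module structure. -/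
set_option synthInstance.maxHeartbeats 400000
set_option maxHeartbeats 1000000

/-- For a birational extension `R ⊆ S` (realized as a subalgebra `S` of an `R`-algebra `A`),
the conductor `co(R,S) = {r ∈ R : r · S ⊆ R}`, as an ideal of `R`. -/
def conductorTo (R : Type*) [CommRing R] {A : Type*} [CommRing A] [Algebra R A]
    (S : Subalgebra R A) : Ideal R where
  carrier := {r : R | ∀ s ∈ S, algebraMap R A r * s ∈ (algebraMap R A).range}
  add_mem' := by
    intro a b ha hb x hx
    rw [map_add, add_mul]
    exact add_mem (ha x hx) (hb x hx)
  zero_mem' := by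
    intro x hx
    rw [map_zero, zero_mul]
    exact zero_mem _
  smul_mem' := by
    intro c a ha x hx
    rw [smul_eq_mul, map_mul, mul_assoc]
    exact mul_mem ⟨c, rfl⟩ (ha x hx)

/-- The `R`-module structure of `M` extends to an `S`-module structure compatible
with the inclusion `R ⊆ S` (i.e. restricting the `S`-action along `algebraMap R S`
recovers the given `R`-action). -/
def ExtendsToModule (R : Type*) [CommRing R] {A : Type*} [CommRing A] [Algebra R A]
    (S : Subalgebra R A) (M : Type*) [AddCommGroup M] [Module R M] : Prop :=
  ∃ inst : Module S M, ∀ (r : R) (m : M),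
    (letI := inst; (algebraMap R S r) • m) = r • m

/-!
An `S`-module structure on `M` extending its `R`-module structure is the same thing as an
`R`-algebra map `S → End_R(M)`. If `s = a / b ∈ S` acts on `M`, then `b • f (s • m) = a • f m` for
every functional `f`, so `s * f m = f (s • m)` lies in `R`: thus `tr(M) ⊆ co(R,S)`.

Conversely, if `s * f m ∈ R` for all `f` and `m`, then multiplication by `s` is an endomorphism of
`M^*`, and its transpose is an endomorphism of `M^** ≅ M` characterized by
`f (s • m) = s * f m`. Since the functionals separate the points of a reflexive module, this
characterization forces `s ↦ (s • ·)` to be an `R`-algebra map.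
-/

open Module

section

variable (R : Type*) [CommRing R] {A : Type*} [CommRing A] [Algebra R A]
  (S : Subalgebra R A) (M : Type*) [AddCommGroup M] [Module R M]

theorem traceIdeal_le_iff {I : Ideal R} :
    traceIdeal R M ≤ I ↔ ∀ (f : Dual R M) (m : M), f m ∈ I := by
  simp only [traceIdeal, iSup_le_iff, LinearMap.range_le_iff_comap, Submodule.eq_top_iff',
    Submodule.mem_comap]

theorem extendsToModule_iff_nonempty_algHom :
    ExtendsToModule R S M ↔ Nonempty (S →ₐ[R] Module.End R M) := by
  constructor
  · rintro ⟨inst, hcompat⟩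
    have : IsScalarTower R S M := ⟨fun r s m => by rw [Algebra.smul_def, mul_smul, hcompat]⟩
    exact ⟨Algebra.lsmul R R M⟩
  · rintro ⟨g⟩
    exact ⟨Module.compHom M g.toRingHom, fun r m => by
      show g (algebraMap R S r) m = r • m
      rw [AlgHom.commutes, Module.algebraMap_end_apply]⟩

def MulPreservesDual (s : A) : Prop :=
  ∀ (f : Dual R M) (m : M), s * algebraMap R A (f m) ∈ (algebraMap R A).range

variable {R S M}

theorem mulPreservesDual_of_traceIdeal_le (htr : traceIdeal R M ≤ conductorTo R S) {s : A}
    (hs : s ∈ S) : MulPreservesDual R M s :=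
  fun f m => by simpa only [mul_comm] using (traceIdeal_le_iff R M).1 htr f m s hs

end

section Forward

variable {R K : Type*} [CommRing R] [CommRing K] [Algebra R K] [IsFractionRing R K]
  {S : Subalgebra R K} {M : Type*} [AddCommGroup M] [Module R M]

theorem algebraMap_apply_algHom_apply (g : S →ₐ[R] Module.End R M) (f : Dual R M) (s : S)
    (m : M) : algebraMap R K (f (g s m)) = s * algebraMap R K (f m) := by
  obtain ⟨⟨a, b⟩, hab⟩ := IsLocalization.surj (nonZeroDivisors R) (s : K)
  have hs : algebraMap R S b * s = algebraMap R S a := Subtype.ext (by simpa [mul_comm] using hab)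
  have hb : (b : R) • g s m = a • m := by
    rw [← Module.algebraMap_end_apply R R, ← g.commutes, ← Module.End.mul_apply, ← map_mul, hs,
      g.commutes, Module.algebraMap_end_apply]
  apply (IsLocalization.map_units K b).mul_left_cancel
  rw [← map_mul, ← smul_eq_mul, ← f.map_smul, hb, f.map_smul, smul_eq_mul, map_mul, ← hab]
  ring

theorem traceIdeal_le_conductorTo_of_algHom (g : S →ₐ[R] Module.End R M) :
    traceIdeal R M ≤ conductorTo R S := by
  refine (traceIdeal_le_iff R M).2 fun f m s hs => ⟨f (g ⟨s, hs⟩ m), ?_⟩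
  rw [algebraMap_apply_algHom_apply, mul_comm]

end Forward

section Backward

variable {R K : Type*} [CommRing R] [CommRing K] [Algebra R K] [FaithfulSMul R K]
  {M : Type*} [AddCommGroup M] [Module R M]

noncomputable def LinearMap.codRestrictAlgebraMap (g : M →ₗ[R] K)
    (hg : ∀ m, g m ∈ (algebraMap R K).range) : Dual R M :=
  (LinearEquiv.ofInjective (Algebra.linearMap R K) (FaithfulSMul.algebraMap_injective R K)).symm
    ∘ₗ g.codRestrict (LinearMap.range (Algebra.linearMap R K)) hg

@[simp]
theorem LinearMap.algebraMap_codRestrictAlgebraMap_apply (g : M →ₗ[R] K)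
    (hg : ∀ m, g m ∈ (algebraMap R K).range) (m : M) :
    algebraMap R K (g.codRestrictAlgebraMap hg m) = g m :=
  congrArg Subtype.val <| (LinearEquiv.ofInjective (Algebra.linearMap R K)
    (FaithfulSMul.algebraMap_injective R K)).apply_symm_apply (g.codRestrict _ hg m)

noncomputable def dualMul {s : K} (hs : MulPreservesDual R M s) : Dual R M →ₗ[R] Dual R M where
  toFun f := (s • (Algebra.linearMap R K ∘ₗ f)).codRestrictAlgebraMap (by simpa using hs f)
  map_add' f f' := LinearMap.ext fun m => FaithfulSMul.algebraMap_injective R K <| by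
    simp only [LinearMap.algebraMap_codRestrictAlgebraMap_apply, LinearMap.add_apply, map_add,
      LinearMap.smul_apply, LinearMap.comp_apply, Algebra.linearMap_apply, smul_eq_mul, mul_add]
  map_smul' r f := LinearMap.ext fun m => FaithfulSMul.algebraMap_injective R K <| by
    simp only [LinearMap.algebraMap_codRestrictAlgebraMap_apply, LinearMap.smul_apply,
      LinearMap.comp_apply, Algebra.linearMap_apply, smul_eq_mul, RingHom.id_apply, map_mul]
    ring

theorem algebraMap_dualMul_apply {s : K} (hs : MulPreservesDual R M s) (f : Dual R M) (m : M) :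
    algebraMap R K (dualMul hs f m) = s * algebraMap R K (f m) :=
  LinearMap.algebraMap_codRestrictAlgebraMap_apply _ _ _

variable [IsReflexive R M]

noncomputable def mulEnd {s : K} (hs : MulPreservesDual R M s) : Module.End R M :=
  (evalEquiv R M).symm.toLinearMap ∘ₗ (dualMul hs).dualMap ∘ₗ Dual.eval R M

theorem eq_mulEnd_iff {s : K} (hs : MulPreservesDual R M s) (φ : Module.End R M) :
    φ = mulEnd hs ↔
      ∀ (f : Dual R M) (m : M), algebraMap R K (f (φ m)) = s * algebraMap R K (f m) := by
  have hmulEnd (f : Dual R M) (m : M) : f (mulEnd hs m) = dualMul hs f m := by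
    simp [mulEnd]
  refine ⟨?_, fun h => LinearMap.ext fun m => (bijective_dual_eval R M).1 <| LinearMap.ext fun f =>
    FaithfulSMul.algebraMap_injective R K ?_⟩
  · rintro rfl f m
    rw [hmulEnd, algebraMap_dualMul_apply]
  · simp only [Dual.eval_apply, h, hmulEnd, algebraMap_dualMul_apply]

@[simp]
theorem algebraMap_apply_mulEnd_apply {s : K} (hs : MulPreservesDual R M s) (f : Dual R M)
    (m : M) : algebraMap R K (f (mulEnd hs m)) = s * algebraMap R K (f m) :=
  (eq_mulEnd_iff hs _).1 rfl f m

noncomputable def algHomOfTraceIdealLe {S : Subalgebra R K}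
    (htr : traceIdeal R M ≤ conductorTo R S) : S →ₐ[R] Module.End R M where
  toFun s := mulEnd (mulPreservesDual_of_traceIdeal_le htr s.2)
  map_one' := ((eq_mulEnd_iff _ _).2 fun f m => by simp).symm
  map_mul' s t := ((eq_mulEnd_iff _ _).2 fun f m => by simp [mul_assoc]).symm
  map_zero' := ((eq_mulEnd_iff _ _).2 fun f m => by simp).symm
  map_add' s t := ((eq_mulEnd_iff _ _).2 fun f m => by simp [add_mul]).symm
  commutes' r := ((eq_mulEnd_iff _ _).2 fun f m => by simp).symm

end Backward

theorem stmt6_general (R : Type*) [CommRing R]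
    (S : Subalgebra R (FractionRing R))
    (M : Type*) [AddCommGroup M] [Module R M] :
    (ExtendsToModule R S M → traceIdeal R M ≤ conductorTo R S)
    ∧ (Module.IsReflexive R M → traceIdeal R M ≤ conductorTo R S →
        ExtendsToModule R S M) := by
  refine ⟨fun h => ?_, fun _ htr => ?_⟩
  · obtain ⟨g⟩ := (extendsToModule_iff_nonempty_algHom R S M).1 h
    exact traceIdeal_le_conductorTo_of_algHom g
  · exact (extendsToModule_iff_nonempty_algHom R S M).2 ⟨algHomOfTraceIdealLe htr⟩

/-- Faber; Dao–Maitra–Sridhar. Let `R` be a Noetherian domain, `S` a ring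
with `R ⊆ S ⊆ Frac R` which is a finitely generated `R`-module, and `M` a finitely
generated `R`-module. (i) If the module structure of `M` extends to `S`, then
`tr(M) ⊆ co(R,S)`. (ii) If `M` is reflexive and `tr(M) ⊆ co(R,S)`, then the module
structure of `M` extends to `S`. -/
theorem stmt6 (R : Type*) [CommRing R] [IsDomain R] [IsNoetherianRing R]
    (S : Subalgebra R (FractionRing R)) (hfin : Module.Finite R S)
    (M : Type*) [AddCommGroup M] [Module R M] [Module.Finite R M] :
    (ExtendsToModule R S M → traceIdeal R M ≤ conductorTo R S)
    ∧ (Module.IsReflexive R M → traceIdeal R M ≤ conductorTo R S →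
        ExtendsToModule R S M) :=
  stmt6_general R S M
end

section
/- Let H ≠ ℕ be a numerical semigroup with Frobenius number f = f(H), let k be a field, and set R = k[[H]]. Then there exists n ≥ 1 with ω_Hⁿ = k[[t]] (equality of R-submodules of k[[t]]) if and only if f − 1 ∈ QF(H). -/
set_option synthInstance.maxHeartbeats 400000
set_option maxHeartbeats 1000000

/-- The Frobenius number of a numerical semigroup `H ⊆ ℕ`: the largest natural number
not in `H` (meaningful when `H ≠ ℕ` and the complement of `H` is finite). -/
noncomputable def frobeniusNumber (H : AddSubmonoid ℕ) : ℕ :=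
  sSup {x : ℕ | x ∉ H}

/-- The set of quasi-Frobenius numbers of a numerical semigroup `H`:
`QF(H) = {x ∈ ℕ \ H : x + h ∈ H for every nonzero h ∈ H}`. -/
def QF (H : AddSubmonoid ℕ) : Set ℕ :=
  {x | x ∉ H ∧ ∀ h ∈ H, h ≠ 0 → x + h ∈ H}

/-- The semigroup power series ring `k[[H]]`: the subalgebra of `k[[t]]` of power series
whose `i`-th coefficient vanishes for all `i ∉ H`. -/
noncomputable def semigroupAlgebra (k : Type*) [Field k] (H : AddSubmonoid ℕ) :
    Subalgebra k (PowerSeries k) where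
  carrier := {g | ∀ i : ℕ, i ∉ H → PowerSeries.coeff i g = 0}
  mul_mem' := by
    intro a b ha hb i hi
    rw [PowerSeries.coeff_mul]
    refine Finset.sum_eq_zero ?_
    rintro ⟨p, q⟩ hpq
    replace hpq : p + q = i := by simpa using hpq
    dsimp only
    by_cases hp : p ∈ H
    · by_cases hq : q ∈ H
      · exact absurd (hpq ▸ H.add_mem hp hq) hi
      · rw [hb q hq, mul_zero]
    · rw [ha p hp, zero_mul]
  one_mem' := by
    intro i hi
    have h0 : i ≠ 0 := fun h => hi (h ▸ H.zero_mem)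
    rw [PowerSeries.coeff_one, if_neg h0]
  add_mem' := by
    intro a b ha hb i hi
    rw [map_add, ha i hi, hb i hi, add_zero]
  zero_mem' := by
    intro i hi
    rw [map_zero]
  algebraMap_mem' := by
    intro r i hi
    have h0 : i ≠ 0 := fun h => hi (h ▸ H.zero_mem)
    simp only [PowerSeries.algebraMap_apply, PowerSeries.coeff_C, if_neg h0]

/-- The canonical module `ω_H` of `k[[H]]`: the `k[[H]]`-submodule of `k[[t]]`
generated by the monomials `t^(f(H) - x)` for `x ∈ QF(H)`. -/
noncomputable def canonicalModule (k : Type*) [Field k] (H : AddSubmonoid ℕ) :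
    Submodule ↥(semigroupAlgebra k H) (PowerSeries k) :=
  Submodule.span ↥(semigroupAlgebra k H)
    ((fun x => (PowerSeries.X : PowerSeries k) ^ (frobeniusNumber H - x)) '' QF H)

/-!
Write `f = f(H)`, which always lies in `QF(H)`. If `f - 1 ∈ QF(H)`, then `1 = t^(f - f)` and
`t = t^(f - (f - 1))` lie in `ω_H`, so `ω_H^f` contains `1, t, …, t^f`; every power series is a
`k`-combination of these plus a series supported beyond `f`, which lies in `k[[H]]`. Conversely,
if `f - 1 ∉ QF(H)` then no generator of `ω_H` has a term in `t`; as `1 ∉ H`, the series without a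
term in `t` form a `k[[H]]`-submodule closed under products, which contains every `ω_Hⁿ` but not `t`.
-/

open PowerSeries

section NumericalSemigroup

variable {H : AddSubmonoid ℕ}

lemma le_frobeniusNumber (hfin : ((H : Set ℕ)ᶜ).Finite) {x : ℕ} (hx : x ∉ H) :
    x ≤ frobeniusNumber H :=
  le_csSup hfin.bddAbove hx

lemma mem_of_frobeniusNumber_lt (hfin : ((H : Set ℕ)ᶜ).Finite) {x : ℕ}
    (hx : frobeniusNumber H < x) : x ∈ H :=
  not_imp_comm.mp (le_frobeniusNumber hfin) hx.not_ge

lemma frobeniusNumber_notMem (hfin : ((H : Set ℕ)ᶜ).Finite) (hne : H ≠ ⊤) :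
    frobeniusNumber H ∉ H := by
  obtain ⟨x, hx⟩ : ∃ x, x ∉ H := by
    simpa [AddSubmonoid.eq_top_iff'] using hne
  exact Nat.sSup_mem ⟨x, hx⟩ hfin.bddAbove

lemma frobeniusNumber_pos (hfin : ((H : Set ℕ)ᶜ).Finite) (hne : H ≠ ⊤) :
    0 < frobeniusNumber H :=
  Nat.pos_of_ne_zero fun h => frobeniusNumber_notMem hfin hne (h ▸ H.zero_mem)

lemma frobeniusNumber_mem_QF (hfin : ((H : Set ℕ)ᶜ).Finite) (hne : H ≠ ⊤) :
    frobeniusNumber H ∈ QF H :=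
  ⟨frobeniusNumber_notMem hfin hne, fun _ _ hh0 =>
    mem_of_frobeniusNumber_lt hfin (Nat.lt_add_of_pos_right (Nat.pos_of_ne_zero hh0))⟩

lemma one_notMem_of_ne_top (hne : H ≠ ⊤) : 1 ∉ H := fun h1 =>
  hne <| (AddSubmonoid.eq_top_iff' H).mpr fun x => by simpa using H.nsmul_mem h1 x

end NumericalSemigroup

section SemigroupAlgebra

variable {k : Type*} [Field k] {H : AddSubmonoid ℕ}

lemma mem_semigroupAlgebra_of_coeff_eq_zero (hfin : ((H : Set ℕ)ᶜ).Finite) {g : k⟦X⟧}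
    (hg : ∀ i ≤ frobeniusNumber H, coeff i g = 0) : g ∈ semigroupAlgebra k H :=
  fun i hi => hg i (le_frobeniusNumber hfin hi)

lemma C_mem_semigroupAlgebra (c : k) : C c ∈ semigroupAlgebra k H := by
  simpa using (semigroupAlgebra k H).algebraMap_mem c

lemma eq_top_of_X_pow_mem (hfin : ((H : Set ℕ)ᶜ).Finite)
    {N : Submodule (semigroupAlgebra k H) k⟦X⟧} (hN : ∀ j ≤ frobeniusNumber H, X ^ j ∈ N) :
    N = ⊤ := by
  refine Submodule.eq_top_iff'.mpr fun g => ?_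
  rw [eq_X_pow_mul_shift_add_trunc (frobeniusNumber H + 1) g]
  refine N.add_mem ?_ ?_
  · have htail : X ^ (frobeniusNumber H + 1) * mk (fun i => coeff (i + (frobeniusNumber H + 1)) g)
        ∈ semigroupAlgebra k H :=
      mem_semigroupAlgebra_of_coeff_eq_zero hfin fun i hi => by
        rw [coeff_X_pow_mul', if_neg (by omega)]
    simpa [Subalgebra.smul_def] using N.smul_mem ⟨_, htail⟩ (hN 0 (Nat.zero_le _))
  · rw [trunc_apply, ← Polynomial.coeToPowerSeries.ringHom_apply, map_sum]
    refine N.sum_mem fun j hj => ?_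
    rw [Polynomial.coeToPowerSeries.ringHom_apply, Polynomial.coe_monomial,
      monomial_eq_C_mul_X_pow]
    exact N.smul_mem ⟨_, C_mem_semigroupAlgebra _⟩
      (hN j (Nat.lt_succ_iff.mp (Finset.mem_Ico.mp hj).2))

variable (k) in
def coeffOneKer (h1 : 1 ∉ H) : Submodule (semigroupAlgebra k H) k⟦X⟧ where
  carrier := {g | coeff 1 g = 0}
  add_mem' ha hb := by simp_all
  zero_mem' := map_zero _
  smul_mem' r g hg := by
    simp_all [Subalgebra.smul_def, coeff_one_mul, r.2 1 h1]

lemma mem_coeffOneKer {h1 : 1 ∉ H} {g : k⟦X⟧} : g ∈ coeffOneKer k h1 ↔ coeff 1 g = 0 :=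
  Iff.rfl

lemma pow_le_coeffOneKer (h1 : 1 ∉ H) {M : Submodule (semigroupAlgebra k H) k⟦X⟧}
    (hM : M ≤ coeffOneKer k h1) (n : ℕ) : M ^ n ≤ coeffOneKer k h1 := fun _ hg =>
  Submodule.pow_induction_on_left M (fun r => r.2 1 h1) (fun _ _ => add_mem)
    (fun m hm x hx => by
      simp_all [mem_coeffOneKer, coeff_one_mul, mem_coeffOneKer.mp (hM hm)]) hg

lemma X_pow_mem_canonicalModule {x : ℕ} (hx : x ∈ QF H) :
    X ^ (frobeniusNumber H - x) ∈ canonicalModule k H :=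
  Submodule.subset_span ⟨x, hx, rfl⟩

lemma canonicalModule_le_coeffOneKer (h1 : 1 ∉ H) (h : frobeniusNumber H - 1 ∉ QF H) :
    canonicalModule k H ≤ coeffOneKer k h1 := by
  refine Submodule.span_le.mpr ?_
  rintro _ ⟨x, hx, rfl⟩
  rw [SetLike.mem_coe, mem_coeffOneKer, coeff_X_pow, if_neg]
  intro hfx
  exact h (by rwa [show frobeniusNumber H - 1 = x by omega])

end SemigroupAlgebra

/-- Let `H ≠ ℕ` be a numerical semigroup with Frobenius number `f` and
`R = k[[H]]`. Then `ω_Hⁿ = k[[t]]` for some `n ≥ 1` if and only if `f - 1 ∈ QF(H)`. -/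
theorem stmt8 (k : Type*) [Field k] (H : AddSubmonoid ℕ)
    (hfin : ((H : Set ℕ)ᶜ).Finite) (hne : H ≠ ⊤) :
    (∃ n : ℕ, 1 ≤ n ∧ canonicalModule k H ^ n = ⊤) ↔
      frobeniusNumber H - 1 ∈ QF H := by
  have h1 := one_notMem_of_ne_top hne
  constructor
  · rintro ⟨n, -, hn⟩
    by_contra hQF
    have hX : (X : k⟦X⟧) ∈ coeffOneKer k h1 :=
      pow_le_coeffOneKer h1 (canonicalModule_le_coeffOneKer h1 hQF) n (hn ▸ Submodule.mem_top)
    simp [mem_coeffOneKer] at hX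
  · intro hQF
    have hf := frobeniusNumber_pos hfin hne
    have h1ω : 1 ≤ canonicalModule k H := Submodule.one_le.mpr <| by
      simpa using X_pow_mem_canonicalModule (k := k) (frobeniusNumber_mem_QF hfin hne)
    have hXω : X ∈ canonicalModule k H := by
      simpa [Nat.sub_sub_self hf] using X_pow_mem_canonicalModule (k := k) hQF
    exact ⟨frobeniusNumber H, hf, eq_top_of_X_pow_mem hfin fun j hj =>
      pow_le_pow_right₀ h1ω hj (Submodule.pow_mem_pow _ hXω j)⟩
end

section
/- Let H be a numerical semigroup minimally generated by n < a₂ < ⋯ < a_n (so the number of minimal generators equals the smallest generator n; in particular n ≥ 2). Then QF(H) = {a₂ − n, a₃ − n, …, a_n − n}, and the Frobenius number of H is f(H) = a_n − n. -/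
set_option synthInstance.maxHeartbeats 400000
set_option maxHeartbeats 1000000

/-!
Minimality makes each generator `aᵢ` with `i ≠ 0` the least element of `H` in its class modulo
`n`; hence the `n` generators are pairwise incongruent modulo `n`, and `{0, a₁, …, a_{n-1}}` is
the Apéry set of `n` in `H`. Since `aᵢ + a_k` is not a minimal generator, it is not in the Apéry
set, i.e. `aᵢ + a_k - n ∈ H`; this makes every `aᵢ - n` a quasi-Frobenius number. Conversely
`x ∈ QF(H)` puts `x + n` into the Apéry set. The largest gap is the largest `aᵢ - n`.
-/

namespace AddSubmonoid

theorem notMem_closure_sdiff_singleton {M : Type*} [AddMonoid M] {S : Set M}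
    (hmin : ∀ B : Set M, B ⊂ S → closure B ≠ closure S) {s : M} (hs : s ∈ S) :
    s ∉ closure (S \ {s}) := by
  intro hs'
  refine hmin (S \ {s}) ⟨Set.sdiff_subset, fun hsub => (hsub hs).2 rfl⟩ ?_
  refine le_antisymm (closure_mono Set.sdiff_subset) (closure_le.mpr fun t ht => ?_)
  by_cases hts : t = s
  · exact hts ▸ hs'
  · exact subset_closure ⟨ht, hts⟩

theorem add_mul_mem {H : AddSubmonoid ℕ} {s m : ℕ} (hs : s ∈ H) (hm : m ∈ H) (t : ℕ) :
    s + m * t ∈ H := by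
  rw [mul_comm, ← smul_eq_mul]
  exact add_mem hs (nsmul_mem hm t)

theorem mem_of_le_of_modEq {H : AddSubmonoid ℕ} {s m x : ℕ} (hs : s ∈ H) (hm : m ∈ H)
    (hle : s ≤ x) (hmod : s ≡ x [MOD m]) : x ∈ H := by
  obtain ⟨t, rfl⟩ := (Nat.modEq_iff_exists_eq_add hle).mp hmod
  exact add_mul_mem hs hm t

theorem le_of_mem_closure {S : Set ℕ} {m x : ℕ} (hS : ∀ s ∈ S, m ≤ s) (hx : x ∈ closure S)
    (hx0 : x ≠ 0) : m ≤ x := by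
  induction hx using closure_induction with
  | mem s hs => exact hS s hs
  | zero => exact absurd rfl hx0
  | add u v _ _ ihu ihv =>
    rcases Nat.eq_zero_or_pos u with rfl | hu
    · simpa using ihv (by simpa using hx0)
    · exact (ihu hu.ne').trans (Nat.le_add_right u v)

theorem mem_closure_inter_Iic {S : Set ℕ} {x : ℕ} (hx : x ∈ closure S) :
    x ∈ closure (S ∩ Set.Iic x) := by
  suffices ∀ m, x ≤ m → x ∈ closure (S ∩ Set.Iic m) from this x le_rfl
  induction hx using closure_induction with
  | mem z hz => exact fun m hm => subset_closure ⟨hz, hm⟩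
  | zero => exact fun _ _ => zero_mem _
  | add u v _ _ ihu ihv =>
    exact fun m hm => add_mem (ihu m (by omega)) (ihv m (by omega))

theorem mem_closure_sdiff_singleton_of_lt {S : Set ℕ} {s x : ℕ} (hx : x ∈ closure S)
    (hxs : x < s) : x ∈ closure (S \ {s}) :=
  have hsub : S ∩ Set.Iic x ⊆ S \ {s} := fun _ ht => ⟨ht.1, (lt_of_le_of_lt ht.2 hxs).ne⟩
  closure_mono hsub (mem_closure_inter_Iic hx)

theorem le_of_modEq_of_notMem_closure_sdiff_singleton {S : Set ℕ} {s m x : ℕ}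
    (hs : s ∉ closure (S \ {s})) (hm : m ∈ S) (hms : m ≠ s) (hx : x ∈ closure S)
    (hxs : x ≡ s [MOD m]) : s ≤ x := by
  by_contra! hlt
  exact hs (mem_of_le_of_modEq (mem_closure_sdiff_singleton_of_lt hx hlt)
    (subset_closure ⟨hm, hms⟩) hlt.le hxs)

end AddSubmonoid

/-- The minimal generators, listed increasingly, of a numerical semigroup of maximal embedding
dimension: their number `n` equals the multiplicity `a 0`. -/
structure IsMaxEmbDimGenerators (n : ℕ) (a : Fin n → ℕ) : Prop where
  pos : 0 < n
  strictMono : StrictMono a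
  apply_zero : a ⟨0, pos⟩ = n
  notMem_closure : ∀ j, a j ∉ AddSubmonoid.closure (Set.range a \ {a j})

namespace IsMaxEmbDimGenerators

open AddSubmonoid (add_mul_mem mem_closure_of_mem mem_of_le_of_modEq)

variable {n : ℕ} {a : Fin n → ℕ} (h : IsMaxEmbDimGenerators n a)
include h

theorem self_mem_closure : n ∈ AddSubmonoid.closure (Set.range a) :=
  mem_closure_of_mem ⟨_, h.apply_zero⟩

theorem le_apply (i : Fin n) : n ≤ a i :=
  h.apply_zero ▸ h.strictMono.monotone (Fin.le_def.mpr (Nat.zero_le _))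

theorem lt_apply {i : Fin n} (hi : (i : ℕ) ≠ 0) : n < a i :=
  h.apply_zero ▸ h.strictMono (Fin.lt_def.mpr (Nat.pos_of_ne_zero hi))

theorem le_of_modEq {j : Fin n} (hj : (j : ℕ) ≠ 0) {x : ℕ}
    (hx : x ∈ AddSubmonoid.closure (Set.range a)) (hxj : x ≡ a j [MOD n]) : a j ≤ x :=
  AddSubmonoid.le_of_modEq_of_notMem_closure_sdiff_singleton (h.notMem_closure j)
    ⟨_, h.apply_zero⟩ (h.lt_apply hj).ne hx hxj

theorem exists_modEq (x : ℕ) : ∃ i, a i ≡ x [MOD n] := by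
  have hinj : ∀ i j, i < j → a i % n ≠ a j % n := fun i j hij hmod =>
    (h.strictMono hij).not_ge <|
      h.le_of_modEq (by rw [Fin.lt_def] at hij; omega) (mem_closure_of_mem ⟨i, rfl⟩) hmod
  have hres : Function.Injective fun i => (⟨a i % n, Nat.mod_lt _ h.pos⟩ : Fin n) := by
    intro i j hij
    have hmod : a i % n = a j % n := Fin.mk.inj hij
    rcases lt_trichotomy i j with hlt | heq | hgt
    · exact absurd hmod (hinj i j hlt)
    · exact heq
    · exact absurd hmod.symm (hinj j i hgt)
  obtain ⟨i, hi⟩ := Finite.injective_iff_surjective.mp hres ⟨x % n, Nat.mod_lt _ h.pos⟩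
  exact ⟨i, Fin.mk.inj hi⟩

theorem exists_le_modEq {x : ℕ} (hx : x ∈ AddSubmonoid.closure (Set.range a)) (hx0 : x ≠ 0) :
    ∃ i, a i ≤ x ∧ a i ≡ x [MOD n] := by
  obtain ⟨i, hi⟩ := h.exists_modEq x
  refine ⟨i, ?_, hi⟩
  by_cases hi0 : (i : ℕ) = 0
  · obtain rfl : i = ⟨0, h.pos⟩ := Fin.ext hi0
    rw [h.apply_zero]
    exact AddSubmonoid.le_of_mem_closure (by rintro _ ⟨j, rfl⟩; exact h.le_apply j) hx hx0
  · exact h.le_of_modEq hi0 hx hi.symm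

theorem mem_range_of_sub_notMem {x : ℕ} (hx : x ∈ AddSubmonoid.closure (Set.range a))
    (hx0 : x ≠ 0) (hxn : x - n ∉ AddSubmonoid.closure (Set.range a)) : x ∈ Set.range a := by
  obtain ⟨i, hle, hmod⟩ := h.exists_le_modEq hx hx0
  refine ⟨i, hle.eq_or_lt.resolve_right fun hlt => hxn ?_⟩
  have hin : a i + n ≤ x := hmod.add_le_of_lt hlt
  exact mem_of_le_of_modEq (mem_closure_of_mem ⟨i, rfl⟩) h.self_mem_closure (by omega)
    ((Nat.modEq_sub_modulus_iff (by omega)).mpr hmod)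

theorem add_sub_mem (i k : Fin n) : a i + a k - n ∈ AddSubmonoid.closure (Set.range a) := by
  by_contra hnot
  have hi := h.le_apply i
  have hk := h.le_apply k
  have hn := h.pos
  obtain ⟨j, hj⟩ := h.mem_range_of_sub_notMem
    (add_mem (mem_closure_of_mem ⟨i, rfl⟩) (mem_closure_of_mem ⟨k, rfl⟩)) (by omega) hnot
  refine h.notMem_closure j (hj ▸ add_mem (mem_closure_of_mem ⟨⟨i, rfl⟩, ?_⟩)
    (mem_closure_of_mem ⟨⟨k, rfl⟩, ?_⟩)) <;>
  · simp only [Set.mem_singleton_iff]; omega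

theorem sub_notMem {i : Fin n} (hi : (i : ℕ) ≠ 0) :
    a i - n ∉ AddSubmonoid.closure (Set.range a) := fun hmem => by
  have := h.le_of_modEq hi hmem ((Nat.modEq_sub_modulus_iff (h.le_apply i)).mpr rfl).symm
  have := h.lt_apply hi
  omega

theorem sub_mem_QF {i : Fin n} (hi : (i : ℕ) ≠ 0) :
    a i - n ∈ QF (AddSubmonoid.closure (Set.range a)) := by
  refine ⟨h.sub_notMem hi, fun y hy hy0 => ?_⟩
  obtain ⟨k, hle, hmod⟩ := h.exists_le_modEq hy hy0
  obtain ⟨t, rfl⟩ := (Nat.modEq_iff_exists_eq_add hle).mp hmod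
  have := h.le_apply i
  rw [show a i - n + (a k + n * t) = a i + a k - n + n * t by omega]
  exact add_mul_mem (h.add_sub_mem i k) h.self_mem_closure t

theorem QF_eq : QF (AddSubmonoid.closure (Set.range a)) =
    (fun i : Fin n => a i - n) '' {i | (i : ℕ) ≠ 0} := by
  refine Set.Subset.antisymm (fun x ⟨hx, hqf⟩ => ?_) ?_
  · have hx0 : x ≠ 0 := fun hx0 => hx (hx0 ▸ zero_mem _)
    obtain ⟨i, hi⟩ := h.mem_range_of_sub_notMem (hqf n h.self_mem_closure h.pos.ne')
      (by omega) (by simpa using hx)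
    refine ⟨i, fun hi0 => hx0 ?_, show a i - n = x by omega⟩
    have := h.apply_zero
    rw [show i = ⟨0, h.pos⟩ from Fin.ext hi0] at hi
    omega
  · rintro _ ⟨i, hi, rfl⟩
    exact h.sub_mem_QF hi

theorem frobeniusNumber_eq (hn : 2 ≤ n) :
    frobeniusNumber (AddSubmonoid.closure (Set.range a)) = a ⟨n - 1, by omega⟩ - n := by
  refine IsGreatest.csSup_eq ⟨h.sub_notMem (show n - 1 ≠ 0 by omega), fun y hy => ?_⟩
  obtain ⟨j, hj⟩ := h.exists_modEq y
  have hlt : y < a j := lt_of_not_ge fun hle =>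
    hy (mem_of_le_of_modEq (mem_closure_of_mem ⟨j, rfl⟩) h.self_mem_closure hle hj)
  have hle : a j ≤ a ⟨n - 1, by omega⟩ :=
    h.strictMono.monotone (Fin.le_def.mpr (by have := j.isLt; dsimp only; omega))
  have := hj.symm.add_le_of_lt hlt
  omega

end IsMaxEmbDimGenerators

/-- Let `H` be a numerical semigroup minimally generated by
`n = a 0 < a 1 < ⋯ < a (n-1)` (so the number of minimal generators equals the smallest
generator `n`; in particular `n ≥ 2`). Then `QF(H) = {a i − n : i ≠ 0}` and the
Frobenius number of `H` is `a (n-1) − n`. -/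
theorem stmt12 (H : AddSubmonoid ℕ)
    (n : ℕ) (hn : 2 ≤ n) (a : Fin n → ℕ)
    (hmono : StrictMono a) (ha0 : a ⟨0, by omega⟩ = n)
    (hgen : AddSubmonoid.closure (Set.range a) = H)
    (hmin : ∀ B : Set ℕ, B ⊂ Set.range a → AddSubmonoid.closure B ≠ H) :
    QF H = (fun i : Fin n => a i - n) '' {i : Fin n | (i : ℕ) ≠ 0}
    ∧ frobeniusNumber H = a ⟨n - 1, by omega⟩ - n := by
  subst hgen
  have h : IsMaxEmbDimGenerators n a :=
    ⟨by omega, hmono, ha0, fun j => AddSubmonoid.notMem_closure_sdiff_singleton hmin ⟨j, rfl⟩⟩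
  exact ⟨h.QF_eq, h.frobeniusNumber_eq hn⟩
end
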